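/- If W is a trapezoidal palindrome of length at least 2, then the minimal period of W equals R_W + 1. -/

import Mathlib

open List

variable {α : Type*} [DecidableEq α]

/-- The set of factors (contiguous subwords) of `W`. -/
def factorFinset (W : List α) : Finset (List α) := (W.inits.flatMap List.tails).toFinset

/-- A palindrome is a word equal to its reversal. -/
def Pal (u : List α) : Prop := u.reverse = u

instance : DecidablePred (Pal : List α → Prop) :=
  fun u => inferInstanceAs (Decidable (u.reverse = u))

/-- The set of palindromic factors of `W` (including the empty word). -/
def palFactorFinset (W : List α) : Finset (List α) := (factorFinset W).filter Pal

/-- Subword complexity: the number of distinct factors of `W` of length `n`. -/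
def C (W : List α) (n : ℕ) : ℕ := ((factorFinset W).filter (fun u => u.length = n)).card

/-- Palindromic complexity: number of distinct palindromic factors of `W` of length `n`. -/
def P (W : List α) (n : ℕ) : ℕ := ((palFactorFinset W).filter (fun u => u.length = n)).card

/-- A word is rich if it has exactly `|W| + 1` distinct palindromic factors. -/
def Rich (W : List α) : Prop := (palFactorFinset W).card = W.length + 1

/-- Number of occurrences of `u` as a factor of `W`. -/
def occ (u W : List α) : ℕ := ((List.range (W.length + 1)).filter (fun i => u <+: W.drop i)).length

/-- `Z` is a complete return to `u` in `W`: a factor of `W` with exactly two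
occurrences of `u`, one as a prefix and one as a suffix. -/
def CompleteReturn (u Z W : List α) : Prop := Z <:+: W ∧ u <+: Z ∧ u <:+ Z ∧ occ u Z = 2

/-- `u` is a right special factor of `W`. -/
def RightSpecial (u W : List α) : Prop :=
  ∃ x y : α, x ≠ y ∧ (u ++ [x]) <:+: W ∧ (u ++ [y]) <:+: W

/-- `R_W`: the smallest `p` such that `W` has no right special factor of length `p`. -/
noncomputable def RW (W : List α) : ℕ := sInf {p : ℕ | ∀ u : List α, u.length = p → ¬ RightSpecial u W}

/-- `K_W`: the length of the shortest suffix of `W` occurring exactly once in `W`. -/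
noncomputable def KW (W : List α) : ℕ := sInf {k : ℕ | ∃ u : List α, u <:+ W ∧ u.length = k ∧ occ u W = 1}

/-- A word is trapezoidal if `|W| = R_W + K_W`. -/
def Trapezoidal (W : List α) : Prop := W.length = RW W + KW W

/-- The minimal period of `W`. -/
noncomputable def minPeriod (W : List α) : ℕ :=
  sInf {q : ℕ | 0 < q ∧ ∀ i : ℕ, i + q < W.length → W[i]? = W[i + q]?}

/-- A binary word is balanced if the number of occurrences of a letter in two
factors of equal length differ by at most 1. -/
def BalancedWord (W : List Bool) : Prop :=
  ∀ u v : List Bool, u <:+: W → v <:+: W → u.length = v.length →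
    u.count true ≤ v.count true + 1

/-!
Write `n = R + K` and let `t = W.drop R` be the shortest unrepeated suffix. A period `q ≤ R`
would make `t` reoccur `q` places earlier, so `π_W ≥ R + 1`. Conversely `R + 1` is a period as
soon as `s = W.drop (R + 1)` is a prefix of `W`. Otherwise `s`, being shorter than `t`, reoccurs
at some `0 < j ≤ R`, and the letter before that occurrence must differ from `W[R]`, or `t` would
reoccur. For `j ≤ K` the symmetry of the palindrome forces the two letters to agree. For `j > K`
we have `K < R`, and then counting factors (a trapezoidal word has `k + 1` factors of each length
`k ≤ min K R`) shows that `s` has only one left extension.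
-/

theorem Finset.injOn_erase_of_card_le_card_image_add_one {β γ : Type*} [DecidableEq β]
    [DecidableEq γ] {s : Finset β} {f : β → γ} (hs : s.card ≤ (s.image f).card + 1)
    {a b : β} (ha : a ∈ s) (hb : b ∈ s) (hab : a ≠ b) (hf : f a = f b) :
    Set.InjOn f (s.erase a) := by
  have himage : (s.erase a).image f = s.image f := by
    refine (Finset.image_subset_image (Finset.erase_subset a s)).antisymm fun y hy => ?_
    obtain ⟨z, hz, rfl⟩ := Finset.mem_image.mp hy
    by_cases hza : z = a
    · exact Finset.mem_image.mpr ⟨b, Finset.mem_erase.mpr ⟨hab.symm, hb⟩, by rw [hza, hf]⟩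
    · exact Finset.mem_image_of_mem f (Finset.mem_erase.mpr ⟨hza, hz⟩)
  rw [← Finset.card_image_iff, himage]
  have := Finset.card_erase_of_mem ha
  have := himage ▸ (s.erase a).card_image_le (f := f)
  omega

theorem Finset.eq_or_eq_of_card_le_card_image_add_one {β γ : Type*} [DecidableEq β]
    [DecidableEq γ] {s : Finset β} {f : β → γ} (hs : s.card ≤ (s.image f).card + 1)
    {a b c d : β} (ha : a ∈ s) (hb : b ∈ s) (hc : c ∈ s) (hd : d ∈ s)
    (hab : a ≠ b) (hcd : c ≠ d) (hfab : f a = f b) (hfcd : f c = f d) : c = a ∨ c = b := by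
  have key : ∀ {a b : β}, a ∈ s → b ∈ s → a ≠ b → f a = f b → c = a ∨ d = a := by
    intro a b ha hb hab hfab
    by_contra! h
    exact hcd (Finset.injOn_erase_of_card_le_card_image_add_one hs ha hb hab hfab
      (Finset.mem_erase.mpr ⟨h.1, hc⟩) (Finset.mem_erase.mpr ⟨h.2, hd⟩) hfcd)
  rcases key ha hb hab hfab with h | h
  · exact .inl h
  rcases key hb ha hab.symm hfab.symm with h' | h'
  · exact .inr h'
  · exact absurd (h.symm.trans h') hab

omit [DecidableEq α] in
theorem hasPeriod_of_drop_prefix {W : List α} {q : ℕ} (h : W.drop q <+: W) : W.HasPeriod q := by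
  rw [← prefix_append_right_inj (W.take q), take_append_drop] at h
  exact h

omit [DecidableEq α] in
theorem forall_getElem?_eq_iff_hasPeriod {W : List α} {q : ℕ} :
    (∀ i, i + q < W.length → W[i]? = W[i + q]?) ↔ W.HasPeriod q := by
  rw [hasPeriod_iff_getElem?]
  exact forall_congr' fun i => by constructor <;> intro h hi <;> exact h (by omega)

omit [DecidableEq α] in
theorem minPeriod_le_of_hasPeriod {W : List α} {q : ℕ} (hq : 0 < q) (h : W.HasPeriod q) :
    minPeriod W ≤ q :=
  Nat.sInf_le ⟨hq, forall_getElem?_eq_iff_hasPeriod.mpr h⟩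

omit [DecidableEq α] in
theorem hasPeriod_minPeriod {W : List α} (hW : W ≠ []) :
    0 < minPeriod W ∧ W.HasPeriod (minPeriod W) := by
  have hmem := Nat.sInf_mem (s := {q | 0 < q ∧ ∀ i, i + q < W.length → W[i]? = W[i + q]?})
    ⟨W.length, length_pos_iff.mpr hW, fun i hi => by omega⟩
  exact ⟨hmem.1, forall_getElem?_eq_iff_hasPeriod.mp hmem.2⟩

omit [DecidableEq α] in
theorem Pal.reverse_infix {W u : List α} (hpal : Pal W) (h : u <:+: W) : u.reverse <:+: W := by
  simpa only [show W.reverse = W from hpal] using h.reverse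

omit [DecidableEq α] in
theorem Pal.getElem?_eq {W : List α} (hpal : Pal W) {i : ℕ} (hi : i < W.length) :
    W[i]? = W[W.length - 1 - i]? := by
  conv_lhs => rw [← show W.reverse = W from hpal]
  rw [getElem?_reverse hi]

omit [DecidableEq α] in
theorem exists_prefix_drop_of_infix {u W : List α} (h : u <:+: W) :
    ∃ i, i + u.length ≤ W.length ∧ u <+: W.drop i := by
  obtain ⟨s₁, s₂, rfl⟩ := h
  exact ⟨s₁.length, by simp, by simp⟩

theorem occ_eq_card (u W : List α) :
    occ u W = ((Finset.range (W.length + 1)).filter (fun i => u <+: W.drop i)).card := by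
  rw [occ, ← toFinset_card_of_nodup (nodup_range.filter _)]
  congr 1
  ext i
  simp

theorem eq_of_occ_eq_one {u W : List α} (h : occ u W = 1) {i j : ℕ} (hi : i ≤ W.length)
    (hj : j ≤ W.length) (hui : u <+: W.drop i) (huj : u <+: W.drop j) : i = j := by
  rw [occ_eq_card, Finset.card_eq_one] at h
  obtain ⟨k, hk⟩ := h
  have mem : ∀ {l}, l ≤ W.length → u <+: W.drop l → l = k := fun {l} hl hul => by
    simpa [hk] using (Finset.mem_filter.mpr ⟨Finset.mem_range.mpr (by omega), hul⟩ :
      l ∈ (Finset.range (W.length + 1)).filter (fun i => u <+: W.drop i))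
  rw [mem hi hui, mem hj huj]

theorem exists_ne_of_occ_ne_one {u W : List α} (h : occ u W ≠ 1) {i : ℕ} (hi : i ≤ W.length)
    (hui : u <+: W.drop i) : ∃ j ≠ i, j ≤ W.length ∧ u <+: W.drop j := by
  have hmem : i ∈ (Finset.range (W.length + 1)).filter (fun i => u <+: W.drop i) :=
    Finset.mem_filter.mpr ⟨Finset.mem_range.mpr (by omega), hui⟩
  rw [occ_eq_card] at h
  obtain ⟨j, hj, hji⟩ := Finset.exists_mem_ne
    (lt_of_le_of_ne (Finset.card_pos.mpr ⟨i, hmem⟩) (Ne.symm h)) i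
  obtain ⟨hjn, huj⟩ := Finset.mem_filter.mp hj
  exact ⟨j, hji, by simpa [Nat.lt_succ_iff] using hjn, huj⟩

theorem not_append_infix_of_occ_eq_one {W : List α} {i : ℕ} (hi : i ≤ W.length)
    (h : occ (W.drop i) W = 1) (c : α) : ¬ W.drop i ++ [c] <:+: W := by
  intro hc
  obtain ⟨j, hj, hjc⟩ := exists_prefix_drop_of_infix hc
  simp only [length_append, length_drop, length_singleton] at hj
  have := eq_of_occ_eq_one h (by omega) hi ((prefix_append _ _).trans hjc) (prefix_refl _)
  omega

theorem occ_nil (W : List α) : occ [] W = W.length + 1 := by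
  simp [occ]

theorem occ_self {W : List α} (hW : W ≠ []) : occ W W = 1 := by
  rw [occ_eq_card, Finset.card_eq_one]
  refine ⟨0, Finset.ext fun i => ?_⟩
  simp only [Finset.mem_filter, Finset.mem_range, Finset.mem_singleton]
  refine ⟨fun ⟨_, hp⟩ => ?_, fun h => ⟨by omega, by simp [h]⟩⟩
  have := hp.length_le
  have := length_pos_iff.mpr hW
  simp only [length_drop] at *
  omega

theorem occ_drop_length_sub_KW {W : List α} (hW : W ≠ []) :
    occ (W.drop (W.length - KW W)) W = 1 := by
  obtain ⟨u, hu, hlen, hocc⟩ := Nat.sInf_mem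
    (s := {k | ∃ u : List α, u <:+ W ∧ u.length = k ∧ occ u W = 1})
    ⟨W.length, W, suffix_refl W, rfl, occ_self hW⟩
  have hK : KW W = u.length := hlen.symm
  rwa [hK, ← suffix_iff_eq_drop.mp hu]

theorem occ_ne_one_of_lt_KW {u W : List α} (hu : u <:+ W) (hk : u.length < KW W) :
    occ u W ≠ 1 := by
  intro h
  have : KW W ≤ u.length := Nat.sInf_le ⟨u, hu, rfl, h⟩
  omega

theorem one_le_KW {W : List α} (hW : W ≠ []) : 1 ≤ KW W := by
  by_contra! h
  have := occ_drop_length_sub_KW hW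
  rw [Nat.lt_one_iff.mp h, Nat.sub_zero, drop_length, occ_nil] at this
  exact hW (length_eq_zero_iff.mp (by omega))

omit [DecidableEq α] in
theorem exists_rightSpecial_of_lt_RW {W : List α} {k : ℕ} (hk : k < RW W) :
    ∃ u : List α, u.length = k ∧ RightSpecial u W := by
  by_contra! h
  exact Nat.notMem_of_lt_sInf hk fun u hu => h u hu

def factorsOfLength (W : List α) (k : ℕ) : Finset (List α) :=
  (factorFinset W).filter (fun u => u.length = k)

theorem C_eq_card_factorsOfLength (W : List α) (k : ℕ) : C W k = (factorsOfLength W k).card :=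
  rfl

theorem mem_factorFinset {u W : List α} : u ∈ factorFinset W ↔ u <:+: W := by
  simp only [factorFinset, mem_toFinset, mem_flatMap, mem_inits, mem_tails]
  constructor
  · rintro ⟨p, hp, hu⟩
    exact hu.isInfix.trans hp.isInfix
  · rintro ⟨s₁, s₂, rfl⟩
    exact ⟨s₁ ++ u, ⟨s₂, rfl⟩, ⟨s₁, rfl⟩⟩

theorem mem_factorsOfLength {u W : List α} {k : ℕ} :
    u ∈ factorsOfLength W k ↔ u <:+: W ∧ u.length = k := by
  rw [factorsOfLength, Finset.mem_filter, mem_factorFinset]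

theorem C_zero (W : List α) : C W 0 = 1 := by
  rw [C_eq_card_factorsOfLength, Finset.card_eq_one]
  refine ⟨[], Finset.ext fun u => ?_⟩
  simp only [mem_factorsOfLength, length_eq_zero_iff, Finset.mem_singleton]
  exact ⟨And.right, fun h => ⟨h ▸ nil_infix, h⟩⟩

theorem C_le_length_sub_add_one (W : List α) (k : ℕ) : C W k ≤ W.length - k + 1 := by
  have hsub : factorsOfLength W k ⊆
      (Finset.range (W.length - k + 1)).image (fun i => (W.drop i).take k) := by
    intro u hu
    obtain ⟨hinf, rfl⟩ := mem_factorsOfLength.mp hu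
    obtain ⟨i, hi, hui⟩ := exists_prefix_drop_of_infix hinf
    exact Finset.mem_image.mpr ⟨i, Finset.mem_range.mpr (by omega), (prefix_iff_eq_take.mp hui).symm⟩
  calc C W k ≤ _ := Finset.card_le_card hsub
    _ ≤ _ := Finset.card_image_le
    _ = W.length - k + 1 := Finset.card_range _

omit [DecidableEq α] in
theorem exists_append_infix_of_prefix_drop {u W : List α} {i : ℕ} (hu : u <+: W.drop i)
    (hi : i + u.length < W.length) : ∃ x, u ++ [x] <:+: W := by
  obtain ⟨t, ht⟩ := hu
  obtain ⟨x, t', rfl⟩ := exists_cons_of_ne_nil (l := t) <| by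
    rintro rfl
    have := congrArg length ht
    simp only [append_nil, length_drop] at this
    omega
  refine ⟨x, ((prefix_append (u ++ [x]) t').trans ?_).isInfix.trans (drop_suffix i W).isInfix⟩
  rw [← ht, append_assoc, singleton_append]

theorem mem_image_dropLast_of_append_infix {u W : List α} {x : α} (h : u ++ [x] <:+: W) :
    u ∈ (factorsOfLength W (u.length + 1)).image dropLast :=
  Finset.mem_image.mpr ⟨u ++ [x], mem_factorsOfLength.mpr ⟨h, by simp⟩, dropLast_concat⟩

theorem erase_subset_image_dropLast (W : List α) (k : ℕ) :
    (factorsOfLength W k).erase (W.drop (W.length - k)) ⊆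
      (factorsOfLength W (k + 1)).image dropLast := by
  intro u hu
  obtain ⟨hne, hu⟩ := Finset.mem_erase.mp hu
  obtain ⟨hinf, rfl⟩ := mem_factorsOfLength.mp hu
  obtain ⟨i, hi, hui⟩ := exists_prefix_drop_of_infix hinf
  have hlt : i + u.length < W.length := by
    refine lt_of_le_of_ne hi fun heq => hne ?_
    rw [show W.length - u.length = i by omega]
    exact hui.eq_of_length (by rw [length_drop]; omega)
  obtain ⟨x, hx⟩ := exists_append_infix_of_prefix_drop hui hlt
  exact mem_image_dropLast_of_append_infix hx

theorem subset_image_dropLast_of_lt_KW {W : List α} {k : ℕ} (hk : k < KW W) :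
    factorsOfLength W k ⊆ (factorsOfLength W (k + 1)).image dropLast := by
  intro u hu
  by_cases hne : u = W.drop (W.length - k)
  · subst hne
    have hlen := (mem_factorsOfLength.mp hu).2
    obtain ⟨j, hj, hjn, huj⟩ := exists_ne_of_occ_ne_one
      (occ_ne_one_of_lt_KW (drop_suffix _ _) (hlen ▸ hk)) (Nat.sub_le _ _) (prefix_refl _)
    have := huj.length_le
    simp only [length_drop] at this hlen
    obtain ⟨x, hx⟩ := exists_append_infix_of_prefix_drop huj (by rw [length_drop]; omega)
    simpa [hlen] using mem_image_dropLast_of_append_infix hx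
  · exact erase_subset_image_dropLast W k (Finset.mem_erase.mpr ⟨hne, hu⟩)

theorem card_image_dropLast_lt_of_lt_RW {W : List α} {k : ℕ} (hk : k < RW W) :
    ((factorsOfLength W (k + 1)).image dropLast).card < C W (k + 1) := by
  obtain ⟨u, rfl, x, y, hxy, hx, hy⟩ := exists_rightSpecial_of_lt_RW hk
  refine Finset.card_image_le.lt_of_ne fun h => hxy ?_
  have hinj := Finset.card_image_iff.mp h
  have heq := hinj (mem_factorsOfLength.mpr ⟨hx, by simp⟩) (mem_factorsOfLength.mpr ⟨hy, by simp⟩)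
    (by simp only [dropLast_concat])
  simpa using heq

theorem C_lt_C_succ_of_lt_KW {W : List α} {k : ℕ} (hkK : k < KW W) (hkR : k < RW W) :
    C W k < C W (k + 1) :=
  (Finset.card_le_card (subset_image_dropLast_of_lt_KW hkK)).trans_lt
    (card_image_dropLast_lt_of_lt_RW hkR)

theorem C_le_C_succ_of_lt_RW {W : List α} {k : ℕ} (hk : k < RW W) : C W k ≤ C W (k + 1) := by
  have h1 := Finset.card_le_card (erase_subset_image_dropLast W k)
  have h2 := Finset.pred_card_le_card_erase (s := factorsOfLength W k) (a := W.drop (W.length - k))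
  have h3 := card_image_dropLast_lt_of_lt_RW hk
  simp only [C_eq_card_factorsOfLength] at h3 ⊢
  omega

theorem C_add_sub_le_of_le_KW {W : List α} {k m : ℕ} (hkm : k ≤ m) (hmK : m ≤ KW W)
    (hmR : m ≤ RW W) : C W k + (m - k) ≤ C W m := by
  induction m, hkm using Nat.le_induction with
  | base => simp
  | succ m hkm ih =>
    have := C_lt_C_succ_of_lt_KW (W := W) (by omega) (by omega : m < RW W)
    have := ih (by omega) (by omega)
    omega

theorem C_le_C_of_le_RW {W : List α} {k m : ℕ} (hkm : k ≤ m) (hmR : m ≤ RW W) :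
    C W k ≤ C W m := by
  induction m, hkm using Nat.le_induction with
  | base => rfl
  | succ m hkm ih => exact (ih (by omega)).trans (C_le_C_succ_of_lt_RW (by omega))

theorem Trapezoidal.C_eq {W : List α} (htrap : Trapezoidal W) (hKR : KW W ≤ RW W) {k : ℕ}
    (hk : k ≤ KW W) : C W k = k + 1 := by
  have hlow := C_add_sub_le_of_le_KW (W := W) (Nat.zero_le k) hk (hk.trans hKR)
  have hup := C_add_sub_le_of_le_KW (W := W) hk le_rfl hKR
  have hmono := C_le_C_of_le_RW (W := W) hKR le_rfl
  have hmax := C_le_length_sub_add_one W (RW W)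
  rw [C_zero] at hlow
  unfold Trapezoidal at htrap
  omega

/-- There are `KW W` factors of length `KW W - 1`, all right-extendable, and `KW W + 1` of length
`KW W`, so `dropLast` identifies exactly one pair of the latter. -/
theorem Trapezoidal.eq_of_right_extensions {W u v : List α} (htrap : Trapezoidal W)
    (hKR : KW W ≤ RW W) (hu : u.length + 1 = KW W) (hv : v.length = u.length)
    {x y x' y' : α} (hxy : x ≠ y) (hx : u ++ [x] <:+: W) (hy : u ++ [y] <:+: W)
    (hxy' : x' ≠ y') (hx' : v ++ [x'] <:+: W) (hy' : v ++ [y'] <:+: W) :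
    v = u ∧ (x' = x ∨ x' = y) := by
  set k := u.length
  have hcard : (factorsOfLength W (k + 1)).card ≤
      ((factorsOfLength W (k + 1)).image dropLast).card + 1 := by
    have h1 := htrap.C_eq hKR (k := k + 1) hu.le
    have h2 := htrap.C_eq hKR (k := k) (by omega)
    have h3 := Finset.card_le_card (subset_image_dropLast_of_lt_KW (W := W) (k := k) (by omega))
    rw [C_eq_card_factorsOfLength] at h1 h2
    omega
  have mem : ∀ {w : List α} {z : α}, w.length = k → w ++ [z] <:+: W →
      w ++ [z] ∈ factorsOfLength W (k + 1) :=
    fun hw h => mem_factorsOfLength.mpr ⟨h, by simp [hw]⟩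
  have hne : ∀ {w : List α} {z z' : α}, z ≠ z' → w ++ [z] ≠ w ++ [z'] :=
    fun h e => h (by simpa using e)
  have key := Finset.eq_or_eq_of_card_le_card_image_add_one hcard (mem rfl hx) (mem rfl hy)
    (mem hv hx') (mem hv hy') (hne hxy) (hne hxy') (by simp only [dropLast_concat])
    (by simp only [dropLast_concat])
  rcases key with h | h
  · obtain ⟨rfl, h⟩ := append_inj' h rfl
    exact ⟨rfl, .inl (by simpa using h)⟩
  · obtain ⟨rfl, h⟩ := append_inj' h rfl
    exact ⟨rfl, .inr (by simpa using h)⟩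

theorem length_lt_add_KW_of_hasPeriod {W : List α} (hW : W ≠ []) {q : ℕ} (hq : 0 < q)
    (hper : W.HasPeriod q) : W.length < q + KW W := by
  by_contra! h
  set i := W.length - KW W
  have hocc : W.drop i <+: W.drop (i - q) := by
    have := (hper.drop_prefix q).drop (i - q)
    rwa [drop_drop, show q + (i - q) = i by omega] at this
  have := eq_of_occ_eq_one (occ_drop_length_sub_KW hW) (by omega) (by omega) (prefix_refl _) hocc
  omega

omit [DecidableEq α] in
theorem Pal.getElem?_pred_eq_of_drop_prefix_drop {W : List α} (hpal : Pal W) {q j : ℕ}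
    (h : W.drop q <+: W.drop j) (hj : 0 < j) (hq : 0 < q) (hjq : j + q ≤ W.length + 1) :
    W[j - 1]? = W[q - 1]? := by
  rw [hpal.getElem?_eq (by omega : j - 1 < W.length)]
  by_cases hjq' : j + q = W.length + 1
  · congr 1
    omega
  have hp : W.length - j - q < (W.drop q).length := by rw [length_drop]; omega
  have hshift := prefix_iff_getElem?.mp h _ hp
  rw [← getElem?_eq_getElem hp, getElem?_drop, getElem?_drop] at hshift
  rw [show W.length - 1 - (j - 1) = q + (W.length - j - q) by omega, ← hshift,
    hpal.getElem?_eq (by omega)]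
  congr 1
  omega

theorem occ_drop_RW {W : List α} (htrap : Trapezoidal W) (hW : W ≠ []) :
    occ (W.drop (RW W)) W = 1 := by
  have hn : W.length = RW W + KW W := htrap
  rw [show RW W = W.length - KW W by omega]
  exact occ_drop_length_sub_KW hW

/-- A second left extension of this suffix makes its reversal `r` right special. By uniqueness,
`r` is then the tail of a right special factor `c :: r` of length `KW W < RW W`, with `W[RW W]` among
its extensions; mirroring back, `W.drop (RW W) ++ [c]` occurs in `W`. -/
theorem Trapezoidal.cons_drop_RW_add_one_eq {W : List α} (htrap : Trapezoidal W) (hpal : Pal W)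
    (hKR : KW W < RW W) {x : α} (hx : x :: W.drop (RW W + 1) <:+: W) :
    x :: W.drop (RW W + 1) = W.drop (RW W) := by
  obtain ⟨u, hu, x', y', hxy', hx', hy'⟩ := exists_rightSpecial_of_lt_RW hKR
  have hn : W.length = RW W + KW W := htrap
  have hW : W ≠ [] := ne_nil_of_length_pos (by have := hx'.length_le; simp at this; omega)
  have hR : RW W < W.length := by have := one_le_KW hW; omega
  set s := W.drop (RW W + 1)
  have ht : W.drop (RW W) = W[RW W] :: s := drop_eq_getElem_cons hR
  rw [ht]
  by_contra hne
  have hxR : W[RW W] ≠ x := fun h => hne (by rw [h])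
  obtain ⟨c, g, rfl⟩ := exists_cons_of_length_pos (l := u) (by omega)
  have hsa : s.reverse ++ [W[RW W]] <:+: W := by
    have := (drop_suffix (RW W) W).isInfix
    rw [ht] at this
    simpa using hpal.reverse_infix this
  have hsx : s.reverse ++ [x] <:+: W := by simpa using hpal.reverse_infix hx
  have hg : ∀ {z}, c :: g ++ [z] <:+: W → g ++ [z] <:+: W :=
    fun h => (suffix_cons c _).isInfix.trans h
  obtain ⟨rfl, hmem⟩ := htrap.eq_of_right_extensions hKR.le (by simpa using hu)
    (by simp [s] at hu ⊢; omega) hxy' (hg hx') (hg hy') hxR hsa hsx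
  have hca : c :: s.reverse ++ [W[RW W]] <:+: W := by
    rcases hmem with h | h <;> rwa [h]
  refine not_append_infix_of_occ_eq_one hR.le (occ_drop_RW htrap hW) c ?_
  rw [ht]
  simpa using hpal.reverse_infix hca

theorem Trapezoidal.drop_RW_add_one_prefix {W : List α} (htrap : Trapezoidal W) (hpal : Pal W)
    (hW : W ≠ []) : W.drop (RW W + 1) <+: W := by
  have hn : W.length = RW W + KW W := htrap
  have hR : RW W < W.length := by have := one_le_KW hW; omega
  by_contra hs
  obtain ⟨j, hjR, hjn, hj⟩ := exists_ne_of_occ_ne_one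
    (occ_ne_one_of_lt_KW (drop_suffix (RW W + 1) W) (by simp; omega)) (by omega) (prefix_refl _)
  have hj0 : j ≠ 0 := by
    rintro rfl
    exact hs (by simpa using hj)
  have hjle : j ≤ RW W := by
    have := hj.length_le
    simp only [length_drop] at this
    omega
  have hdrop : W.drop (j - 1) = W[j - 1] :: W.drop j := by
    simpa [Nat.sub_add_cancel (Nat.pos_of_ne_zero hj0)] using
      drop_eq_getElem_cons (l := W) (i := j - 1) (by omega)
  have hprev : W[j - 1] = W[RW W] := by
    rcases le_or_gt j (KW W) with hjK | hKj
    · simpa [getElem?_eq_getElem (show j - 1 < W.length by omega), getElem?_eq_getElem hR] using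
        hpal.getElem?_pred_eq_of_drop_prefix_drop hj (by omega) (by omega) (by omega)
    · have hcons : W[j - 1] :: W.drop (RW W + 1) <+: W.drop (j - 1) := by
        rw [hdrop]
        exact (prefix_cons_inj _).mpr hj
      have := htrap.cons_drop_RW_add_one_eq hpal (by omega)
        (hcons.isInfix.trans (drop_suffix _ _).isInfix)
      rw [drop_eq_getElem_cons hR] at this
      exact (cons_eq_cons.mp this).1
  have hocc : W.drop (RW W) <+: W.drop (j - 1) := by
    rw [drop_eq_getElem_cons hR, hdrop, hprev]
    exact (prefix_cons_inj _).mpr hj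
  have := eq_of_occ_eq_one (occ_drop_RW htrap hW) hR.le (by omega) (prefix_refl _) hocc
  omega

theorem stmt19 {α : Type*} [DecidableEq α] (W : List α) (h2 : 2 ≤ W.length)
    (htrap : Trapezoidal W) (hpal : Pal W) : minPeriod W = RW W + 1 := by
  have hW : W ≠ [] := ne_nil_of_length_pos (by omega)
  have hn : W.length = RW W + KW W := htrap
  obtain ⟨hp0, hp⟩ := hasPeriod_minPeriod hW
  have hlower := length_lt_add_KW_of_hasPeriod hW hp0 hp
  have hupper := minPeriod_le_of_hasPeriod (Nat.succ_pos _)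
    (hasPeriod_of_drop_prefix (htrap.drop_RW_add_one_prefix hpal hW))
  omega
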